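/- arXiv:1405.1223 — 2 statements merged into one kernel-verified Lean document; each statement's English description precedes it below -/
import Mathlib

section
/- Let C be a convex body in the plane, R_opt a maximum-area rectangle contained in C, and K an ε-kernel of C with ε ∈ (0, 1/32). Then K contains a rectangle of area at least (1−32ε)·area(R_opt); specifically, the rectangle obtained by scaling R_opt by factor 1−16ε about its center is contained in K. -/
open scoped RealInnerProductSpace
noncomputable section

abbrev V : Type := EuclideanSpace ℝ (Fin 2)

/-- Directional width of a set in direction `u`. -/
def width (u : V) (C : Set V) : ℝ :=
  sSup ((fun p => ⟪p, u⟫) '' C) - sInf ((fun p => ⟪p, u⟫) '' C)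

/-- A convex body in the plane. -/
def IsConvexBody (C : Set V) : Prop :=
  IsCompact C ∧ Convex ℝ C ∧ (interior C).Nonempty

/-- `K` is an `ε`-kernel of `C`. -/
def IsKernel (ε : ℝ) (K C : Set V) : Prop :=
  K ⊆ C ∧ IsCompact K ∧ Convex ℝ K ∧
    ∀ u : V, ‖u‖ = 1 → (1 - ε) * width u C ≤ width u K

/-- The parallelogram with vertices `x, x+u, x+v, x+u+v`. -/
def Q (x u v : V) : Set V := convexHull ℝ {x, x + u, x + v, x + u + v}

/-- The axis-parallel rectangle `[-a,a] × [-b,b]`. -/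
def rect (a b : ℝ) : Set V := {p | |p 0| ≤ a ∧ |p 1| ≤ b}

/-!
Let `c` be the centre of the maximal rectangle `R = Q x u v` and `s(w) = |⟪u, w⟫| + |⟪v, w⟫|`
its width in direction `w`. Every point `c + X • u + Y • v` of `C` has `|X| + |Y| ≤ 4`: the
triangle it spans with two opposite corners of `R` has area `(|X| + |Y|) / 2 * area R`, and a
triangle inside a convex set contains a rectangle of half its area. So the width of `C` in
direction `w` is at most `8 s(w)`, while `C` reaches `⟪c, w⟫ + s(w) / 2`. The kernel inequality
then pushes the support function of `K` up to `⟪c, w⟫ + (1 - 16ε) s(w) / 2`, the support function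
of the shrunken rectangle, and a compact convex set contains every point lying below its support
function. The area bound is `(1 - 16ε)² ≥ 1 - 32ε`.
-/

open MeasureTheory Pointwise

def cross (a b : V) : ℝ := a 0 * b 1 - a 1 * b 0

theorem eq_smul_add_smul_of_cross_ne_zero {u v : V} (h : cross u v ≠ 0) (z : V) :
    z = (cross z v / cross u v) • u + (cross u z / cross u v) • v := by
  ext i
  simp only [PiLp.add_apply, PiLp.smul_apply, smul_eq_mul]
  field_simp
  fin_cases i <;>
  · simp only [Fin.zero_eta, Fin.mk_one, Fin.isValue, cross]
    ring

theorem mul_le_mul_abs_of_abs_le {s r : ℝ} (h : |s| ≤ r) (a : ℝ) : s * a ≤ r * |a| :=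
  (le_abs_self _).trans (abs_mul s a ▸ mul_le_mul_of_nonneg_right h (abs_nonneg a))

theorem exists_abs_le_one_mul_eq_abs (a : ℝ) : ∃ σ : ℝ, |σ| ≤ 1 ∧ σ * a = |a| := by
  rcases le_total 0 a with h | h
  · exact ⟨1, by norm_num, by rw [one_mul, abs_of_nonneg h]⟩
  · exact ⟨-1, by norm_num, by rw [neg_one_mul, abs_of_nonpos h]⟩

section Parallelogram

variable (x u v : V)

theorem Q_eq_vadd_parallelepiped : Q x u v = x +ᵥ parallelepiped ![u, v] := by
  rw [parallelepiped_eq_convexHull, Q, ← convexHull_vadd]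
  congr 1
  ext p
  simp only [Fin.sum_univ_two, Set.mem_vadd_set, Set.mem_add, Set.mem_insert_iff,
    Set.mem_singleton_iff]
  aesop (add simp add_assoc)

theorem volume_Q : volume (Q x u v) = ENNReal.ofReal |cross u v| := by
  rw [Q_eq_vadd_parallelepiped, measure_vadd,
    ← (EuclideanSpace.basisFun (Fin 2) ℝ).addHaar_eq_volume, Measure.addHaar_parallelepiped,
    Module.Basis.det_apply, Matrix.det_fin_two]
  simp [cross, Module.Basis.toMatrix_apply, mul_comm]

theorem mem_Q {p : V} : p ∈ Q x u v ↔
    ∃ s ∈ Set.Icc (0:ℝ) 1, ∃ t ∈ Set.Icc (0:ℝ) 1, p = x + s • u + t • v := by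
  simp [Q_eq_vadd_parallelepiped, parallelepiped_eq_sum_segment, Fin.sum_univ_two, Set.mem_add,
    Set.mem_vadd_set, segment_eq_image, add_assoc, eq_comm (a := p)]

theorem mem_Q_iff_center {p : V} : p ∈ Q x u v ↔
    ∃ s t : ℝ, |s| ≤ 2⁻¹ ∧ |t| ≤ 2⁻¹ ∧ p = x + (2⁻¹:ℝ) • (u + v) + (s • u + t • v) := by
  rw [mem_Q]
  constructor
  · rintro ⟨s, ⟨hs₀, hs₁⟩, t, ⟨ht₀, ht₁⟩, rfl⟩
    exact ⟨s - 2⁻¹, t - 2⁻¹, abs_le.2 ⟨by linarith, by linarith⟩,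
      abs_le.2 ⟨by linarith, by linarith⟩, by module⟩
  · rintro ⟨s, t, hs, ht, rfl⟩
    obtain ⟨hs₀, hs₁⟩ := abs_le.1 hs
    obtain ⟨ht₀, ht₁⟩ := abs_le.1 ht
    exact ⟨s + 2⁻¹, ⟨by linarith, by linarith⟩, t + 2⁻¹, ⟨by linarith, by linarith⟩, by module⟩

theorem Q_subset_iff {C : Set V} (hC : Convex ℝ C) :
    Q x u v ⊆ C ↔ x ∈ C ∧ x + u ∈ C ∧ x + v ∈ C ∧ x + u + v ∈ C := by
  simp only [Q, hC.convexHull_subset_iff, Set.insert_subset_iff, Set.singleton_subset_iff]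

theorem inner_sub_center_le_of_mem_Q {p : V} (hp : p ∈ Q x u v) (w : V) :
    ⟪p - (x + (2⁻¹:ℝ) • (u + v)), w⟫ ≤ 2⁻¹ * (|⟪u, w⟫| + |⟪v, w⟫|) := by
  obtain ⟨s, t, hs, ht, rfl⟩ := (mem_Q_iff_center x u v).1 hp
  rw [add_sub_cancel_left, inner_add_left, real_inner_smul_left,
    real_inner_smul_left]
  linarith [mul_le_mul_abs_of_abs_le hs ⟪u, w⟫, mul_le_mul_abs_of_abs_le ht ⟪v, w⟫]

theorem exists_mem_Q_inner_sub_center_eq (w : V) :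
    ∃ p ∈ Q x u v, ⟪p - (x + (2⁻¹:ℝ) • (u + v)), w⟫ = 2⁻¹ * (|⟪u, w⟫| + |⟪v, w⟫|) := by
  obtain ⟨σ, hσ, hσu⟩ := exists_abs_le_one_mul_eq_abs ⟪u, w⟫
  obtain ⟨τ, hτ, hτv⟩ := exists_abs_le_one_mul_eq_abs ⟪v, w⟫
  refine ⟨x + (2⁻¹:ℝ) • (u + v) + ((σ / 2) • u + (τ / 2) • v),
    (mem_Q_iff_center x u v).2 ⟨σ / 2, τ / 2, ?_, ?_, rfl⟩, ?_⟩
  · rw [abs_div, abs_two]; linarith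
  · rw [abs_div, abs_two]; linarith
  · rw [add_sub_cancel_left, inner_add_left, real_inner_smul_left,
      real_inner_smul_left]
    linarith

theorem Q_subset_ball (z : V) {r : ℝ} (h : ‖u‖ + ‖v‖ < 2 * r) :
    Q (z - (2⁻¹:ℝ) • (u + v)) u v ⊆ Metric.ball z r := by
  intro p hp
  obtain ⟨s, t, hs, ht, rfl⟩ := (mem_Q_iff_center _ u v).1 hp
  rw [Metric.mem_ball, dist_eq_norm, sub_add_cancel, add_sub_cancel_left]
  calc ‖s • u + t • v‖ ≤ |s| * ‖u‖ + |t| * ‖v‖ := by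
        simpa only [norm_smul, Real.norm_eq_abs] using norm_add_le (s • u) (t • v)
    _ ≤ 2⁻¹ * ‖u‖ + 2⁻¹ * ‖v‖ := by gcongr
    _ < r := by linarith

end Parallelogram

section Triangle

variable {C : Set V} {A B P : V}

theorem exists_foot_of_longest_side (h₁ : ‖P - A‖ ≤ ‖B - A‖) (h₂ : ‖P - B‖ ≤ ‖B - A‖) :
    ∃ κ ∈ Set.Icc (0:ℝ) 1, ⟪P - A - κ • (B - A), B - A⟫ = 0 := by
  have hPB : ‖P - B‖ ^ 2 = ‖P - A‖ ^ 2 - 2 * ⟪P - A, B - A⟫ + ‖B - A‖ ^ 2 := by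
    rw [← norm_sub_sq_real, sub_sub_sub_cancel_right]
  have h₁' := pow_le_pow_left₀ (norm_nonneg _) h₁ 2
  have h₂' := pow_le_pow_left₀ (norm_nonneg _) h₂ 2
  refine ⟨⟪P - A, B - A⟫ / ‖B - A‖ ^ 2, ⟨?_, ?_⟩, ?_⟩
  · exact div_nonneg (by linarith [sq_nonneg ‖P - A‖]) (sq_nonneg _)
  · exact div_le_one_of_le₀ (by linarith [sq_nonneg ‖P - B‖]) (sq_nonneg _)
  · rw [inner_sub_left, real_inner_smul_left, real_inner_self_eq_norm_sq,
      div_mul_cancel_of_imp fun h => by simp_all, sub_self]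

theorem exists_rectangle_of_longest_side (hC : Convex ℝ C) (hA : A ∈ C) (hB : B ∈ C)
    (hP : P ∈ C) (h₁ : ‖P - A‖ ≤ ‖B - A‖) (h₂ : ‖P - B‖ ≤ ‖B - A‖) :
    ∃ x' u' v' : V, ⟪u', v'⟫ = 0 ∧ Q x' u' v' ⊆ C ∧
      4 * |cross u' v'| = |cross (B - A) (P - A)| := by
  obtain ⟨κ, hκ, hfoot⟩ := exists_foot_of_longest_side h₁ h₂
  have hF : A + κ • (B - A) ∈ C := hC.add_smul_sub_mem hA hB hκ
  have mid : ∀ {p q : V}, p ∈ C → q ∈ C → (2⁻¹:ℝ) • (p + q) ∈ C := fun hp hq => by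
    simpa only [smul_add] using hC hp hq (by norm_num) (by norm_num) (by norm_num)
  refine ⟨A + (κ / 2) • (B - A), (2⁻¹:ℝ) • (B - A), (2⁻¹:ℝ) • (P - A - κ • (B - A)), ?_, ?_, ?_⟩
  · rw [real_inner_smul_left, real_inner_smul_right, real_inner_comm, hfoot, mul_zero, mul_zero]
  · -- The corners are the midpoints of `A F`, `F B`, `A P` and `B P`,
    -- where `F = A + κ • (B - A)` is the foot of the altitude from `P`.
    rw [Q_subset_iff _ _ _ hC]
    refine ⟨?_, ?_, ?_, ?_⟩
    · convert mid hA hF using 1; module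
    · convert mid hF hB using 1; module
    · convert mid hA hP using 1; module
    · convert mid hB hP using 1; module
  · have h : 4 * cross ((2⁻¹:ℝ) • (B - A)) ((2⁻¹:ℝ) • (P - A - κ • (B - A))) =
        cross (B - A) (P - A) := by
      simp only [cross, PiLp.sub_apply, PiLp.smul_apply, smul_eq_mul]
      ring
    rw [← h, abs_mul, abs_of_nonneg (by norm_num : (0:ℝ) ≤ 4)]

theorem exists_rectangle_of_triangle (hC : Convex ℝ C) (hA : A ∈ C) (hB : B ∈ C) (hP : P ∈ C) :
    ∃ x' u' v' : V, ⟪u', v'⟫ = 0 ∧ Q x' u' v' ⊆ C ∧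
      4 * |cross u' v'| = |cross (B - A) (P - A)| := by
  have hBP : ‖A - B‖ ≤ ‖P - B‖ → ‖A - P‖ ≤ ‖P - B‖ → ∃ x' u' v' : V, ⟪u', v'⟫ = 0 ∧
      Q x' u' v' ⊆ C ∧ 4 * |cross u' v'| = |cross (B - A) (P - A)| := fun h₁ h₂ => by
    obtain ⟨x', u', v', h⟩ := exists_rectangle_of_longest_side hC hB hP hA h₁ h₂
    refine ⟨x', u', v', h.1, h.2.1, h.2.2.trans (congrArg _ ?_)⟩
    simp only [cross, PiLp.sub_apply]
    ring
  have hAP : ‖B - A‖ ≤ ‖P - A‖ → ‖B - P‖ ≤ ‖P - A‖ → ∃ x' u' v' : V, ⟪u', v'⟫ = 0 ∧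
      Q x' u' v' ⊆ C ∧ 4 * |cross u' v'| = |cross (B - A) (P - A)| := fun h₁ h₂ => by
    obtain ⟨x', u', v', h⟩ := exists_rectangle_of_longest_side hC hA hP hB h₁ h₂
    refine ⟨x', u', v', h.1, h.2.1, h.2.2.trans ?_⟩
    rw [← abs_neg]
    congr 1
    simp only [cross, PiLp.sub_apply]
    ring
  rw [norm_sub_rev A B, norm_sub_rev A P] at hBP
  rw [norm_sub_rev B P] at hAP
  rcases le_total ‖P - A‖ ‖B - A‖ with h₁ | h₁ <;> rcases le_total ‖P - B‖ ‖B - A‖ with h₂ | h₂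
  · exact exists_rectangle_of_longest_side hC hA hB hP h₁ h₂
  · exact hBP h₂ (h₁.trans h₂)
  · exact hAP h₁ (h₂.trans h₁)
  · rcases le_total ‖P - B‖ ‖P - A‖ with h₃ | h₃
    · exact hAP h₁ h₃
    · exact hBP h₂ h₃

end Triangle

section MaximalParallelogram

variable {C : Set V} {x u v : V}

theorem cross_ne_zero_of_forall_rectangle_le (hC : (interior C).Nonempty)
    (hmax : ∀ x' u' v' : V, ⟪u', v'⟫ = 0 → Q x' u' v' ⊆ C → |cross u' v'| ≤ |cross u v|) :
    cross u v ≠ 0 := by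
  obtain ⟨z, hz⟩ := hC
  obtain ⟨r, hr, hball⟩ := Metric.isOpen_iff.1 isOpen_interior z hz
  set e₀ : V := EuclideanSpace.single 0 (r / 2)
  set e₁ : V := EuclideanSpace.single 1 (r / 2)
  have hnorm : ‖e₀‖ + ‖e₁‖ < 2 * r := by
    simp only [e₀, e₁, PiLp.norm_single, Real.norm_eq_abs, abs_of_pos (half_pos hr)]
    linarith
  have hsq := hmax _ e₀ e₁ (by simp [e₀, e₁, EuclideanSpace.inner_single_left])
    ((Q_subset_ball e₀ e₁ z hnorm).trans (hball.trans interior_subset))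
  have he : cross e₀ e₁ = (r / 2) ^ 2 := by
    simp only [cross, e₀, e₁, PiLp.single_eq_same, PiLp.single_eq_of_ne, ne_eq, one_ne_zero,
      zero_ne_one, not_false_eq_true, mul_zero, sub_zero]
    ring
  intro h
  rw [h, he, abs_zero] at hsq
  exact hsq.not_gt (by positivity)

theorem abs_add_abs_le_four (hC : Convex ℝ C) (hRC : Q x u v ⊆ C)
    (hmax : ∀ x' u' v' : V, ⟪u', v'⟫ = 0 → Q x' u' v' ⊆ C → |cross u' v'| ≤ |cross u v|)
    (huv : cross u v ≠ 0) {X Y : ℝ} (hp : x + (2⁻¹:ℝ) • (u + v) + (X • u + Y • v) ∈ C) :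
    |X| + |Y| ≤ 4 := by
  set c := x + (2⁻¹:ℝ) • (u + v)
  obtain ⟨σ, hσ, hσY⟩ := exists_abs_le_one_mul_eq_abs Y
  obtain ⟨τ, hτ, hτX⟩ := exists_abs_le_one_mul_eq_abs X
  have corner : ∀ {s t : ℝ}, |s| ≤ 1 → |t| ≤ 1 → c + ((s / 2) • u + (t / 2) • v) ∈ C :=
    fun hs ht => hRC ((mem_Q_iff_center x u v).2 ⟨_, _, by rw [abs_div, abs_two]; linarith,
      by rw [abs_div, abs_two]; linarith, rfl⟩)
  -- The triangle on two opposite corners of `Q x u v` and the given point has area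
  -- `(|X| + |Y|) / 2 * |cross u v|`.
  obtain ⟨x', u', v', huv', hQ', harea⟩ := exists_rectangle_of_triangle hC
    (corner (s := -σ) (t := τ) (by rwa [abs_neg]) hτ)
    (corner (s := σ) (t := -τ) hσ (by rwa [abs_neg])) hp
  have hcross : cross (c + ((σ / 2) • u + (-τ / 2) • v) - (c + ((-σ / 2) • u + (τ / 2) • v)))
      (c + (X • u + Y • v) - (c + ((-σ / 2) • u + (τ / 2) • v))) =
      (σ * Y + τ * X) * cross u v := by
    simp only [cross, PiLp.add_apply, PiLp.sub_apply, PiLp.smul_apply, smul_eq_mul]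
    ring
  rw [hcross, abs_mul, hσY, hτX, abs_of_nonneg (add_nonneg (abs_nonneg Y) (abs_nonneg X))] at harea
  have := hmax x' u' v' huv' hQ'
  exact le_of_mul_le_mul_right (by linarith) (abs_pos.2 huv)

theorem inner_sub_center_le_of_mem (hC : Convex ℝ C) (hRC : Q x u v ⊆ C)
    (hmax : ∀ x' u' v' : V, ⟪u', v'⟫ = 0 → Q x' u' v' ⊆ C → |cross u' v'| ≤ |cross u v|)
    (huv : cross u v ≠ 0) {p : V} (hp : p ∈ C) (w : V) :
    ⟪p - (x + (2⁻¹:ℝ) • (u + v)), w⟫ ≤ 4 * (|⟪u, w⟫| + |⟪v, w⟫|) := by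
  have hdec := eq_smul_add_smul_of_cross_ne_zero huv (p - (x + (2⁻¹:ℝ) • (u + v)))
  set X := cross (p - (x + (2⁻¹:ℝ) • (u + v))) v / cross u v
  set Y := cross u (p - (x + (2⁻¹:ℝ) • (u + v))) / cross u v
  have hXY : |X| + |Y| ≤ 4 :=
    abs_add_abs_le_four hC hRC hmax huv (by rwa [← hdec, add_sub_cancel])
  rw [hdec, inner_add_left, real_inner_smul_left, real_inner_smul_left]
  linarith [mul_le_mul_abs_of_abs_le (show |X| ≤ 4 by linarith [abs_nonneg Y]) ⟪u, w⟫,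
    mul_le_mul_abs_of_abs_le (show |Y| ≤ 4 by linarith [abs_nonneg X]) ⟪v, w⟫]

end MaximalParallelogram

section SupportFunction

def supportFun (S : Set V) (w : V) : ℝ := sSup ((fun p => ⟪p, w⟫) '' S)

variable {S T : Set V}

theorem width_eq_supportFun_add_supportFun_neg (w : V) (S : Set V) :
    width w S = supportFun S w + supportFun S (-w) := by
  rw [width, supportFun, supportFun, Real.sInf_def, sub_neg_eq_add]
  congr 3
  ext
  simp [inner_neg_right, neg_eq_iff_eq_neg]

theorem le_supportFun (hS : IsCompact S) {p : V} (hp : p ∈ S) (w : V) : ⟪p, w⟫ ≤ supportFun S w :=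
  le_csSup (hS.image (continuous_id.inner continuous_const)).bddAbove ⟨p, hp, rfl⟩

theorem supportFun_le (hS : S.Nonempty) {w : V} {r : ℝ} (h : ∀ p ∈ S, ⟪p, w⟫ ≤ r) :
    supportFun S w ≤ r :=
  csSup_le (hS.image _) (Set.forall_mem_image.2 h)

theorem supportFun_mono (hT : IsCompact T) (hS : S.Nonempty) (hST : S ⊆ T) (w : V) :
    supportFun S w ≤ supportFun T w :=
  supportFun_le hS fun _ hp => le_supportFun hT (hST hp) w

theorem mem_of_forall_inner_le_supportFun (hS : IsCompact S) (hconv : Convex ℝ S)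
    (hne : S.Nonempty) {q : V} (h : ∀ w : V, ‖w‖ = 1 → ⟪q, w⟫ ≤ supportFun S w) : q ∈ S := by
  by_contra hq
  obtain ⟨f, s, hfS, hfq⟩ := geometric_hahn_banach_closed_point hconv hS.isClosed hq
  set w₀ := (InnerProductSpace.toDual ℝ V).symm f
  have hf : ∀ y, f y = ⟪y, w₀⟫ := fun y => by
    rw [real_inner_comm, InnerProductSpace.toDual_symm_apply]
  obtain ⟨k, hk⟩ := hne
  have hw₀ : w₀ ≠ 0 := by
    intro h
    have := (hfS k hk).trans hfq
    simp [hf, h] at this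
  have hn : 0 < ‖w₀‖⁻¹ := inv_pos.2 (norm_pos_iff.2 hw₀)
  have hsep : supportFun S (‖w₀‖⁻¹ • w₀) < ⟪q, ‖w₀‖⁻¹ • w₀⟫ :=
    calc supportFun S (‖w₀‖⁻¹ • w₀) ≤ ‖w₀‖⁻¹ * s :=
          supportFun_le ⟨k, hk⟩ fun p hp => by
            rw [real_inner_smul_right, ← hf]
            exact mul_le_mul_of_nonneg_left (hfS p hp).le hn.le
      _ < ⟪q, ‖w₀‖⁻¹ • w₀⟫ := by
          rw [real_inner_smul_right, ← hf]
          exact mul_lt_mul_of_pos_left hfq hn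
  exact hsep.not_ge (h _ (norm_smul_inv_norm hw₀))

end SupportFunction

section Kernel

variable {C K : Set V} {x u v : V} {ε : ℝ}

theorem inner_center_add_le_supportFun (hC : IsCompact C) (hRC : Q x u v ⊆ C) (w : V) :
    ⟪x + (2⁻¹:ℝ) • (u + v), w⟫ + 2⁻¹ * (|⟪u, w⟫| + |⟪v, w⟫|) ≤ supportFun C w := by
  obtain ⟨p, hp, hpw⟩ := exists_mem_Q_inner_sub_center_eq x u v w
  rw [← hpw, inner_sub_left, add_sub_cancel]
  exact le_supportFun hC (hRC hp) w

theorem abs_add_abs_le_width (hC : IsCompact C) (hRC : Q x u v ⊆ C) (w : V) :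
    |⟪u, w⟫| + |⟪v, w⟫| ≤ width w C := by
  have h₁ := inner_center_add_le_supportFun hC hRC w
  have h₂ := inner_center_add_le_supportFun hC hRC (-w)
  simp only [inner_neg_right, abs_neg] at h₂
  rw [width_eq_supportFun_add_supportFun_neg]
  linarith

theorem supportFun_le_inner_center_add (hC : Convex ℝ C) (hRC : Q x u v ⊆ C)
    (hmax : ∀ x' u' v' : V, ⟪u', v'⟫ = 0 → Q x' u' v' ⊆ C → |cross u' v'| ≤ |cross u v|)
    (huv : cross u v ≠ 0) (w : V) :
    supportFun C w ≤ ⟪x + (2⁻¹:ℝ) • (u + v), w⟫ + 4 * (|⟪u, w⟫| + |⟪v, w⟫|) := by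
  refine supportFun_le ⟨x, hRC (subset_convexHull ℝ _ (Set.mem_insert x _))⟩ fun p hp => ?_
  linarith [inner_sub_center_le_of_mem hC hRC hmax huv hp w,
    inner_sub_left (𝕜 := ℝ) p (x + (2⁻¹:ℝ) • (u + v)) w]

theorem IsKernel.nonempty (hK : IsKernel ε K C) (hε : ε < 1) (hC : IsCompact C)
    (hRC : Q x u v ⊆ C) (hu : u ≠ 0) : K.Nonempty := by
  by_contra hKe
  have hw : ‖‖u‖⁻¹ • u‖ = 1 := by
    rw [norm_smul, norm_inv, norm_norm, inv_mul_cancel₀ (norm_ne_zero_iff.2 hu)]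
  have hKw := hK.2.2.2 _ hw
  have hCw := abs_add_abs_le_width hC hRC (‖u‖⁻¹ • u)
  have hK0 : width (‖u‖⁻¹ • u) K = 0 := by simp [width, Set.not_nonempty_iff_eq_empty.1 hKe]
  have hu' : 0 < |⟪u, ‖u‖⁻¹ • u⟫| := by
    rw [real_inner_smul_right, real_inner_self_eq_norm_sq]
    exact abs_pos.2 (by positivity)
  nlinarith [abs_nonneg ⟪v, ‖u‖⁻¹ • u⟫]

theorem inner_center_add_le_supportFun_of_isKernel (hC₁ : IsCompact C) (hC₂ : Convex ℝ C)
    (hK : IsKernel ε K C) (hε : 0 ≤ ε) (hKne : K.Nonempty) (hRC : Q x u v ⊆ C)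
    (hmax : ∀ x' u' v' : V, ⟪u', v'⟫ = 0 → Q x' u' v' ⊆ C → |cross u' v'| ≤ |cross u v|)
    (huv : cross u v ≠ 0) {w : V} (hw : ‖w‖ = 1) :
    ⟪x + (2⁻¹:ℝ) • (u + v), w⟫ + (1 - 16 * ε) * (2⁻¹ * (|⟪u, w⟫| + |⟪v, w⟫|)) ≤
      supportFun K w := by
  have hker := hK.2.2.2 w hw
  rw [width_eq_supportFun_add_supportFun_neg, width_eq_supportFun_add_supportFun_neg] at hker
  have hKC := supportFun_mono hC₁ hKne hK.1 (-w)
  have hlow := inner_center_add_le_supportFun hC₁ hRC w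
  have hup := supportFun_le_inner_center_add hC₂ hRC hmax huv w
  have hup' := supportFun_le_inner_center_add hC₂ hRC hmax huv (-w)
  simp only [inner_neg_right, abs_neg] at hup'
  have hwidth := mul_le_mul_of_nonneg_left
    (show supportFun C w + supportFun C (-w) ≤ 8 * (|⟪u, w⟫| + |⟪v, w⟫|) by linarith) hε
  linarith

theorem inner_homothety_le {p : V} (hp : p ∈ Q x u v) {r : ℝ} (hr : 0 ≤ r) (w : V) :
    ⟪AffineMap.homothety (x + (2⁻¹:ℝ) • (u + v)) r p, w⟫ ≤
      ⟪x + (2⁻¹:ℝ) • (u + v), w⟫ + r * (2⁻¹ * (|⟪u, w⟫| + |⟪v, w⟫|)) := by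
  rw [AffineMap.homothety_apply, vsub_eq_sub, vadd_eq_add, inner_add_left, real_inner_smul_left]
  linarith [mul_le_mul_of_nonneg_left (inner_sub_center_le_of_mem_Q x u v hp w) hr]

end Kernel

theorem kernel_contains_large_area_rectangle_general (C K : Set V) (hC : IsConvexBody C)
    (ε : ℝ) (hε : ε ∈ Set.Ioo (0:ℝ) (1/32)) (hK : IsKernel ε K C)
    (x u v : V) (hRC : Q x u v ⊆ C)
    (hopt : ∀ x' u' v' : V, ⟪u', v'⟫ = 0 → Q x' u' v' ⊆ C →
      MeasureTheory.volume (Q x' u' v') ≤ MeasureTheory.volume (Q x u v)) :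
    AffineMap.homothety (x + (2⁻¹ : ℝ) • (u + v)) (1 - 16 * ε) '' Q x u v ⊆ K ∧
    ENNReal.ofReal (1 - 32 * ε) * MeasureTheory.volume (Q x u v) ≤
      MeasureTheory.volume
        (AffineMap.homothety (x + (2⁻¹ : ℝ) • (u + v)) (1 - 16 * ε) '' Q x u v) := by
  obtain ⟨hε₀, hε₁⟩ := hε
  have hmax : ∀ x' u' v' : V, ⟪u', v'⟫ = 0 → Q x' u' v' ⊆ C → |cross u' v'| ≤ |cross u v| :=
    fun x' u' v' h h' => by
      simpa [volume_Q, ENNReal.ofReal_le_ofReal_iff] using hopt x' u' v' h h'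
  have huv := cross_ne_zero_of_forall_rectangle_le hC.2.2 hmax
  have hu : u ≠ 0 := by
    rintro rfl
    simp [cross] at huv
  have hKne : K.Nonempty := hK.nonempty (by linarith) hC.1 hRC hu
  refine ⟨?_, ?_⟩
  · rintro _ ⟨p, hp, rfl⟩
    refine mem_of_forall_inner_le_supportFun hK.2.1 hK.2.2.1 hKne fun w hw => ?_
    exact (inner_homothety_le hp (by linarith) w).trans
      (inner_center_add_le_supportFun_of_isKernel hC.1 hC.2.1 hK hε₀.le hKne hRC hmax huv hw)
  · rw [Measure.addHaar_image_homothety, finrank_euclideanSpace_fin]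
    gcongr
    rw [abs_of_nonneg (sq_nonneg _)]
    nlinarith

/-- an ε-kernel contains the rectangle obtained by scaling a
maximum-area inscribed rectangle by `1 - 16ε` about its center, whose area is at
least `(1 - 32ε)` times the optimal area. -/
theorem kernel_contains_large_area_rectangle (C K : Set V) (hC : IsConvexBody C)
    (ε : ℝ) (hε : ε ∈ Set.Ioo (0:ℝ) (1/32)) (hK : IsKernel ε K C)
    (x u v : V) (huv : ⟪u, v⟫ = 0) (hRC : Q x u v ⊆ C)
    (hopt : ∀ x' u' v' : V, ⟪u', v'⟫ = 0 → Q x' u' v' ⊆ C →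
      MeasureTheory.volume (Q x' u' v') ≤ MeasureTheory.volume (Q x u v)) :
    AffineMap.homothety (x + (2⁻¹ : ℝ) • (u + v)) (1 - 16 * ε) '' Q x u v ⊆ K ∧
    ENNReal.ofReal (1 - 32 * ε) * MeasureTheory.volume (Q x u v) ≤
      MeasureTheory.volume
        (AffineMap.homothety (x + (2⁻¹ : ℝ) • (u + v)) (1 - 16 * ε) '' Q x u v) :=
  kernel_contains_large_area_rectangle_general C K hC ε hε hK x u v hRC hopt
end
end

section
/- Let C be a convex body in the plane containing the rectangle R_opt = [−a,a] × [−b,b] with 0 < (ε/2)a < b ≤ a, such that R_opt has maximum perimeter among rectangles inscribed in C, and let K be an (ε/16)-kernel of C, where ε ∈ (0,1). Then K contains a rectangle of perimeter at least (1−ε)·peri(R_opt); specifically, with t = aε/4, the rectangle S = [−a+t, a−t] × [−b+t, b−t] is contained in K and peri(S) = peri(R_opt) − 8t > (1−ε)·peri(R_opt). -/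
open scoped RealInnerProductSpace
noncomputable section

/-!
Suppose a point `p` of the shrunk rectangle `S` is missing from the kernel `K`. Separating `p` from
the convex set `K` gives a unit direction `u` in which `K` stays below `p`; since the disc of radius
`t` about `p` lies in `R_opt ⊆ C`, the set `C` reaches at least `t` beyond `p`. Hence
`width u K < width u C - t`, while the kernel property gives `width u K ≥ width u C - (ε/16) · 4a`,
because the width of `C` is bounded by its diameter, and the diameter is at most `2a + 2b ≤ 4a`:
a segment in `C` is a degenerate inscribed rectangle, so optimality of `R_opt` bounds its length.
As `(ε/16) · 4a = t`, this is a contradiction.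
-/

open Metric

lemma exists_unit_inner_lt_of_notMem {E : Type*} [NormedAddCommGroup E] [InnerProductSpace ℝ E]
    [CompleteSpace E] {K : Set E} {p : E} (hKconv : Convex ℝ K) (hKclosed : IsClosed K)
    (hKne : K.Nonempty) (hp : p ∉ K) : ∃ u : E, ‖u‖ = 1 ∧ ∀ k ∈ K, ⟪k, u⟫ < ⟪p, u⟫ := by
  obtain ⟨f, c, hfK, hfp⟩ := geometric_hahn_banach_closed_point hKconv hKclosed hp
  set v := (InnerProductSpace.toDual ℝ E).symm f
  have hv : ∀ x, ⟪x, v⟫ = f x := fun x => by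
    rw [real_inner_comm]; exact InnerProductSpace.toDual_symm_apply
  obtain ⟨k, hk⟩ := hKne
  have hv0 : v ≠ 0 := by
    rintro h
    have := (hfK k hk).trans hfp
    rw [← hv, ← hv, h, inner_zero_right, inner_zero_right] at this
    exact lt_irrefl _ this
  refine ⟨‖v‖⁻¹ • v, norm_smul_inv_norm hv0, fun k hk => ?_⟩
  rw [real_inner_smul_right, real_inner_smul_right, hv, hv]
  exact mul_lt_mul_of_pos_left ((hfK k hk).trans hfp) (by positivity)

lemma Q_sub_zero (x y : V) : Q x (y - x) 0 = segment ℝ x y := by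
  rw [Q, add_zero, add_zero, add_sub_cancel, ← convexHull_pair]
  congr 1
  ext z
  simp only [Set.mem_insert_iff, Set.mem_singleton_iff]
  tauto

lemma diam_le_of_forall_rectangle_perimeter_le {C : Set V} {P : ℝ} (hC : Convex ℝ C)
    (hP : 0 ≤ P)
    (hopt : ∀ x u v : V, ⟪u, v⟫ = 0 → Q x u v ⊆ C → 2 * ‖u‖ + 2 * ‖v‖ ≤ P) :
    diam C ≤ P / 2 := by
  refine diam_le_of_forall_dist_le (by linarith) fun x hx y hy => ?_
  have := hopt y (x - y) 0 (inner_zero_right _) (Q_sub_zero y x ▸ hC.segment_subset hy hx)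
  rw [norm_zero, ← dist_eq_norm] at this
  linarith

section Width

variable {C : Set V} {u : V}

lemma le_sSup_inner_image (hC : IsCompact C) {x : V} (hx : x ∈ C) :
    ⟪x, u⟫ ≤ sSup ((fun p => ⟪p, u⟫) '' C) :=
  le_csSup (hC.image (continuous_id.inner continuous_const)).bddAbove ⟨x, hx, rfl⟩

lemma sInf_inner_image_le (hC : IsCompact C) {x : V} (hx : x ∈ C) :
    sInf ((fun p => ⟪p, u⟫) '' C) ≤ ⟪x, u⟫ :=
  csInf_le (hC.image (continuous_id.inner continuous_const)).bddBelow ⟨x, hx, rfl⟩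

lemma inner_sub_le_width (hC : IsCompact C) {x y : V} (hx : x ∈ C) (hy : y ∈ C) :
    ⟪x - y, u⟫ ≤ width u C := by
  rw [inner_sub_left, width]
  exact sub_le_sub (le_sSup_inner_image hC hx) (sInf_inner_image_le hC hy)

lemma width_le_diam (hC : IsCompact C) (hu : ‖u‖ = 1) : width u C ≤ diam C := by
  rcases C.eq_empty_or_nonempty with rfl | hne
  · simp [width]
  have hcont : Continuous fun p : V => ⟪p, u⟫ := continuous_id.inner continuous_const
  obtain ⟨x, hx, hxsup⟩ := (hC.image hcont).sSup_mem (hne.image _)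
  obtain ⟨y, hy, hyinf⟩ := (hC.image hcont).sInf_mem (hne.image _)
  calc width u C = ⟪x - y, u⟫ := by rw [width, ← hxsup, ← hyinf, inner_sub_left]
    _ ≤ ‖x - y‖ * ‖u‖ := real_inner_le_norm _ _
    _ = dist x y := by rw [hu, mul_one, dist_eq_norm]
    _ ≤ diam C := dist_le_diam_of_mem hC.isBounded hx hy

end Width

namespace IsKernel

variable {δ : ℝ} {K C : Set V}

lemma nonempty_s13 (hK : IsKernel δ K C) (hδ : δ < 1) (hC : IsConvexBody C) : K.Nonempty := by
  obtain ⟨z, hz⟩ := hC.2.2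
  obtain ⟨x, hx, y, hy, hxy⟩ : C.Nontrivial := by
    rcases Set.eq_singleton_or_nontrivial (interior_subset hz) with h | h
    · rw [h, interior_singleton] at hz
      exact absurd hz (Set.notMem_empty z)
    · exact h
  rw [Set.nonempty_iff_ne_empty]
  rintro rfl
  have hxy' : x - y ≠ 0 := sub_ne_zero.mpr hxy
  set u := ‖x - y‖⁻¹ • (x - y)
  have hwidth : ‖x - y‖ ≤ width u C := by
    have := inner_sub_le_width (u := u) hC.1 hx hy
    rwa [real_inner_smul_right, real_inner_self_eq_norm_sq, pow_two, ← mul_assoc,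
      inv_mul_cancel₀ (norm_ne_zero_iff.mpr hxy'), one_mul] at this
  have hker := hK.2.2.2 u (norm_smul_inv_norm hxy')
  rw [show width u (∅ : Set V) = 0 by simp [width]] at hker
  nlinarith [norm_pos_iff.mpr hxy']

lemma mem_of_closedBall_subset (hK : IsKernel δ K C) (hC : IsCompact C) (hKne : K.Nonempty)
    (hδ : 0 ≤ δ) {p : V} {r : ℝ} (hball : closedBall p r ⊆ C) (hr : δ * diam C ≤ r) :
    p ∈ K := by
  obtain ⟨hKC, hKcomp, hKconv, hker⟩ := hK
  by_contra hp
  obtain ⟨u, hu, hsep⟩ := exists_unit_inner_lt_of_notMem hKconv hKcomp.isClosed hKne hp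
  have hcont : Continuous fun x : V => ⟪x, u⟫ := continuous_id.inner continuous_const
  obtain ⟨k, hk, hksup⟩ := (hKcomp.image hcont).sSup_mem (hKne.image _)
  have hr0 : 0 ≤ r := le_trans (mul_nonneg hδ diam_nonneg) hr
  have hsupC : ⟪p, u⟫ + r ≤ sSup ((fun x => ⟪x, u⟫) '' C) := by
    have hmem : p + r • u ∈ C := hball <| by
      rw [mem_closedBall, dist_eq_norm, add_sub_cancel_left, norm_smul, hu, mul_one,
        Real.norm_of_nonneg hr0]
    simpa [inner_add_left, real_inner_smul_left, real_inner_self_eq_norm_sq, hu]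
      using le_sSup_inner_image (u := u) hC hmem
  have hinf : sInf ((fun x => ⟪x, u⟫) '' C) ≤ sInf ((fun x => ⟪x, u⟫) '' K) :=
    csInf_le_csInf (hC.image hcont).bddBelow (hKne.image _) (Set.image_mono hKC)
  have hwidth : width u K < width u C - r := by
    have := hsep k hk
    rw [width, width, ← hksup]
    linarith
  have hdiam := mul_le_mul_of_nonneg_left (width_le_diam hC hu) hδ
  linarith [hker u hu]

end IsKernel

lemma closedBall_subset_rect {a b t : ℝ} {p : V} (hp : p ∈ rect (a - t) (b - t)) :
    closedBall p t ⊆ rect a b := by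
  intro q hq
  have hcoord (i : Fin 2) : |q i| ≤ |p i| + t := by
    have := (PiLp.dist_apply_le q p i).trans (mem_closedBall.mp hq)
    rw [Real.dist_eq] at this
    linarith [abs_sub_abs_le_abs_sub (q i) (p i)]
  exact ⟨by linarith [hcoord 0, hp.1], by linarith [hcoord 1, hp.2]⟩

theorem kernel_contains_large_perimeter_rectangle_general (C K : Set V)
    (hC : IsConvexBody C) (a b ε : ℝ)
    (hb : (ε / 2) * a < b) (hba : b ≤ a)
    (hε : ε ∈ Set.Ioo (0:ℝ) 1)
    (hRC : rect a b ⊆ C)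
    (hopt : ∀ x u v : V, ⟪u, v⟫ = 0 → Q x u v ⊆ C →
      2 * ‖u‖ + 2 * ‖v‖ ≤ 4 * a + 4 * b)
    (hK : IsKernel (ε / 16) K C) :
    rect (a - a * ε / 4) (b - a * ε / 4) ⊆ K ∧
    4 * (a - a * ε / 4) + 4 * (b - a * ε / 4) = (4 * a + 4 * b) - 8 * (a * ε / 4) ∧
    (4 * a + 4 * b) - 8 * (a * ε / 4) > (1 - ε) * (4 * a + 4 * b) := by
  obtain ⟨hε0, hε1⟩ := hε
  have ha : 0 < a := by nlinarith
  have hb0 : 0 < b := by nlinarith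
  refine ⟨fun p hp => ?_, by ring, by nlinarith⟩
  have hdiam : diam C ≤ 4 * a :=
    (diam_le_of_forall_rectangle_perimeter_le hC.2.1 (by positivity) hopt).trans (by linarith)
  refine hK.mem_of_closedBall_subset hC.1 (hK.nonempty_s13 (by linarith) hC) (by positivity)
    ((closedBall_subset_rect hp).trans hRC) ?_
  calc ε / 16 * diam C ≤ ε / 16 * (4 * a) := by gcongr
    _ = a * ε / 4 := by ring

/-- fat optimal rectangle case: the `(ε/16)`-kernel contains a
shrunk rectangle of perimeter greater than `(1-ε)` times the optimal perimeter. -/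
theorem kernel_contains_large_perimeter_rectangle (C K : Set V)
    (hC : IsConvexBody C) (a b ε : ℝ)
    (hfat : 0 < (ε / 2) * a) (hb : (ε / 2) * a < b) (hba : b ≤ a)
    (hε : ε ∈ Set.Ioo (0:ℝ) 1)
    (hRC : rect a b ⊆ C)
    (hopt : ∀ x u v : V, ⟪u, v⟫ = 0 → Q x u v ⊆ C →
      2 * ‖u‖ + 2 * ‖v‖ ≤ 4 * a + 4 * b)
    (hK : IsKernel (ε / 16) K C) :
    rect (a - a * ε / 4) (b - a * ε / 4) ⊆ K ∧
    4 * (a - a * ε / 4) + 4 * (b - a * ε / 4) = (4 * a + 4 * b) - 8 * (a * ε / 4) ∧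
    (4 * a + 4 * b) - 8 * (a * ε / 4) > (1 - ε) * (4 * a + 4 * b) :=
  kernel_contains_large_perimeter_rectangle_general C K hC a b ε hb hba hε hRC hopt hK
end
end
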